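/- arXiv:1512.01759 — 2 statements merged into one kernel-verified Lean document; each statement's English description precedes it below -/
import Mathlib

section
/- If u* is a critical point of f(u) = uβ - (1/2)u²σ² + ∫ (ln(1 + uγ(ζ)) - uγ(ζ)) dν(ζ) with 1 + u*γ(ζ) > 0 ν-a.e., then β - u*σ² = ∫ u*γ(ζ)²/(1 + u*γ(ζ)) dν(ζ). -/
open MeasureTheory Filter Real Topology

private lemma stmt2_aux_sign (u G s : ℝ)
    (hs : s = if u < 0 then -1 else 1)
    (hA : 0 < 1 + u * G) (hAhalf : 1 + u * G < 1/2) :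
    0 < -s * G ∧ 1/(2*(|u|+1)) ≤ -s * G := by
  have huG : u * G < -(1/2) := by linarith
  have hu : u ≠ 0 := by rintro rfl; simp at huG; linarith
  have hsG : s * G < 0 := by
    rcases lt_or_gt_of_ne hu with h | h
    · rw [hs, if_pos h]
      have : G > 0 := by nlinarith
      linarith
    · rw [hs, if_neg (not_lt.mpr h.le)]
      have : G < 0 := by nlinarith
      linarith
  have hs1 : s = 1 ∨ s = -1 := by rw [hs]; split_ifs <;> simp
  have hBeq : -s * G = |G| := by
    rcases hs1 with h | h <;> rw [h] <;> rcases abs_cases G with ⟨h2, h3⟩ | ⟨h2, h3⟩ <;>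
      rw [h2] <;> nlinarith [hsG]
  constructor
  · rw [hBeq]; exact abs_pos.mpr (by rintro rfl; simp at huG; linarith)
  · rw [hBeq]
    have h1 : |u| * |G| ≥ 1/2 := by rw [← abs_mul, abs_of_neg (by linarith : u * G < 0)]; linarith
    rw [div_le_iff₀ (by positivity)]
    nlinarith [abs_nonneg u, abs_nonneg G]

private lemma stmt2_aux_range (A B U C' t : ℝ) (hC' : 1 ≤ C') (hU : 1 ≤ U) (hB : |B| ≤ C')
    (hA : 0 < A) (hAub : A ≤ 1 + (U-1)*C')
    (hkey : A < 1/2 → 1/(2*U) ≤ B)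
    (ht0 : 0 < t) (htr : t < 1/(4*C')) :
    min (1/4) (t/(2*U)) ≤ A + t * B ∧ A + t * B ≤ 1 + (U-1)*C' + 1/4 := by
  have hC'0 : (0:ℝ) < C' := by linarith
  have htB : |t * B| ≤ 1/4 := by
    rw [abs_mul, abs_of_pos ht0]
    calc t * |B| ≤ t * C' := by nlinarith [abs_nonneg B]
      _ ≤ 1/4 := by rw [show (1:ℝ)/4 = (1/(4*C'))*C' by field_simp]; nlinarith
  have htB1 : -(1/4) ≤ t*B := by cases' abs_le.mp htB with h1 h2; linarith
  have htB2 : t*B ≤ 1/4 := (abs_le.mp htB).2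
  refine ⟨?_, by linarith⟩
  rcases lt_or_ge A (1/2) with h | h
  · have hB2 := hkey h
    have : t/(2*U) ≤ t * B := by
      rw [div_le_iff₀ (by positivity)]
      have h5 := mul_le_mul_of_nonneg_left hB2 ht0.le
      calc t = t*(1/(2*U))*(2*U) := by field_simp
        _ ≤ t*B*(2*U) := mul_le_mul_of_nonneg_right h5 (by positivity)
    calc min (1/4) (t/(2*U)) ≤ t/(2*U) := min_le_right _ _
      _ ≤ A + t*B := by linarith
  · calc min (1/4) (t/(2*U)) ≤ 1/4 := min_le_left _ _
      _ ≤ A + t*B := by linarith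

private lemma stmt2_aux_nonneg (A B t : ℝ) (hA : 0 < A) (hB : 0 ≤ B) (ht : 0 < t) :
    0 ≤ (Real.log (A + t*B) - Real.log (A + (t/2)*B)) / (t/2) ∧
    (Real.log (A + t*B) - Real.log (A + (t/2)*B)) / (t/2) ≤ B / A := by
  have hx : 0 < A + (t/2)*B := by nlinarith
  have hy : 0 < A + t*B := by nlinarith
  have hxy : A + (t/2)*B ≤ A + t*B := by nlinarith
  constructor
  · apply div_nonneg _ (by linarith)
    have := Real.log_le_log hx hxy
    linarith
  · rw [div_le_div_iff₀ (by linarith) hA]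
    have h1 : Real.log (A + t*B) - Real.log (A + (t/2)*B) = Real.log ((A + t*B)/(A + (t/2)*B)) := by
      rw [Real.log_div hy.ne' hx.ne']
    have h2 : Real.log ((A + t*B)/(A + (t/2)*B)) ≤ (A + t*B)/(A + (t/2)*B) - 1 :=
      Real.log_le_sub_one_of_pos (by positivity)
    have h3 : (A + t*B)/(A + (t/2)*B) - 1 = ((t/2)*B)/(A + (t/2)*B) := by
      field_simp
      ring
    have h4 : ((t/2)*B)/(A + (t/2)*B) ≤ ((t/2)*B)/A := by
      apply div_le_div_of_nonneg_left (by positivity) hA (by linarith)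
    have h6 : (t/2*B/A)*A = t/2*B := by field_simp
    have h7 : Real.log (A + t*B) - Real.log (A + (t/2)*B) ≤ t/2*B/A := by
      rw [h1]; linarith
    nlinarith [mul_le_mul_of_nonneg_right h7 hA.le]

private lemma stmt2_aux_lip (x y : ℝ) (hx : 1/4 ≤ x) (hy : 1/4 ≤ y) :
    |Real.log y - Real.log x| ≤ 4 * |y - x| := by
  have hx0 : (0:ℝ) < x := by linarith
  have hy0 : (0:ℝ) < y := by linarith
  have habs : y - x ≤ |y - x| := le_abs_self _
  have habs2 : x - y ≤ |y - x| := by rw [abs_sub_comm]; exact le_abs_self _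
  have habs0 : (0:ℝ) ≤ |y - x| := abs_nonneg _
  rw [abs_le]
  constructor
  · have h2 : Real.log (x/y) ≤ x/y - 1 := Real.log_le_sub_one_of_pos (by positivity)
    rw [Real.log_div hx0.ne' hy0.ne'] at h2
    have h3 : x/y - 1 = (x-y)/y := by field_simp
    have h4 : (x-y)/y ≤ |y - x| * 4 := by
      rw [div_le_iff₀ hy0]
      nlinarith
    linarith
  · have h2 : Real.log (y/x) ≤ y/x - 1 := Real.log_le_sub_one_of_pos (by positivity)
    rw [Real.log_div hy0.ne' hx0.ne'] at h2
    have h3 : y/x - 1 = (y-x)/x := by field_simp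
    have h4 : (y-x)/x ≤ |y - x| * 4 := by
      rw [div_le_iff₀ hx0]
      nlinarith
    linarith

private lemma stmt2_aux_tendsto (A B : ℝ) (hA : 0 < A) (τ : ℕ → ℝ)
    (hτ : Filter.Tendsto τ atTop (𝓝[≠] (0:ℝ))) :
    Filter.Tendsto (fun n => (Real.log (A + τ n * B) - Real.log (A + (τ n/2) * B)) / (τ n / 2))
      atTop (𝓝 (B/A)) := by
  have hq : HasDerivAt (fun t => Real.log (A + t*B)) (B/A) 0 := by
    have h1 : HasDerivAt (fun t : ℝ => A + t*B) B 0 := by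
      simpa using ((hasDerivAt_id (0:ℝ)).mul_const B).const_add A
    have h2 : HasDerivAt Real.log (A + 0*B)⁻¹ (A + 0*B) :=
      Real.hasDerivAt_log (by simpa using hA.ne')
    have := h2.comp 0 h1
    simp only [zero_mul, add_zero] at this; rw [div_eq_inv_mul]; exact this
  have hsl := hasDerivAt_iff_tendsto_slope.mp hq
  have hτ2 : Filter.Tendsto (fun n => τ n / 2) atTop (𝓝[≠] (0:ℝ)) := by
    rw [tendsto_nhdsWithin_iff] at hτ ⊢
    refine ⟨by simpa using hτ.1.div_const 2, ?_⟩
    filter_upwards [hτ.2] with n hn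
    simp only [Set.mem_compl_iff, Set.mem_singleton_iff] at hn ⊢
    exact div_ne_zero hn two_ne_zero
  have h1 := hsl.comp hτ
  have h2 := hsl.comp hτ2
  have hcomb : Filter.Tendsto (fun n => 2 * (slope (fun t => Real.log (A + t*B)) 0 (τ n))
      - slope (fun t => Real.log (A + t*B)) 0 (τ n / 2)) atTop (𝓝 (B/A)) := by
    have := (h1.const_mul 2).sub h2
    simpa [two_mul] using this
  have hτne : ∀ᶠ n in atTop, τ n ≠ 0 := by
    rw [tendsto_nhdsWithin_iff] at hτ
    filter_upwards [hτ.2] with n hn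
    simpa using hn
  refine Filter.Tendsto.congr' ?_ hcomb
  filter_upwards [hτne] with n hn
  have hs1 : slope (fun t => Real.log (A + t*B)) 0 (τ n)
      = (Real.log (A + τ n * B) - Real.log (A + 0*B)) / (τ n) := by
    rw [slope_def_field]; ring_nf
  have hs2 : slope (fun t => Real.log (A + t*B)) 0 (τ n / 2)
      = (Real.log (A + (τ n/2) * B) - Real.log (A + 0*B)) / (τ n / 2) := by
    rw [slope_def_field]; ring_nf
  rw [hs1, hs2]
  field_simp
  ring

lemma lemA {ν : Measure ℝ} [IsFiniteMeasure ν] (h : ℕ → ℝ → ℝ) (H : ℝ → ℝ) (K : ℝ)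
    (hK : 0 ≤ K) (hint : ∀ n, Integrable (h n) ν)
    (hHm : AEStronglyMeasurable H ν)
    (hbd : ∀ᵐ ζ ∂ν, (-K ≤ H ζ) ∧ ∀ n, -K ≤ h n ζ ∧ h n ζ ≤ max (H ζ) K)
    (hlim : ∀ᵐ ζ ∂ν, Filter.Tendsto (fun n => h n ζ) atTop (𝓝 (H ζ)))
    {L : ℝ} (hL : Filter.Tendsto (fun n => ∫ ζ, h n ζ ∂ν) atTop (𝓝 L)) :
    Integrable H ν ∧ ∫ ζ, H ζ ∂ν = L := by
  -- Step 1: Integrable (H + K) via Fatou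
  have hHK : Integrable (fun ζ => H ζ + K) ν := by
    refine ⟨hHm.add aestronglyMeasurable_const, ?_⟩
    rw [hasFiniteIntegral_iff_ofReal (by
      filter_upwards [hbd] with ζ hb
      simp only [Pi.zero_apply]; linarith [hb.1])]
    have key : ∫⁻ ζ, ENNReal.ofReal (H ζ + K) ∂ν
        ≤ Filter.liminf (fun n => ∫⁻ ζ, ENNReal.ofReal (h n ζ + K) ∂ν) atTop := by
      have := MeasureTheory.lintegral_liminf_le'
        (f := fun n ζ => ENNReal.ofReal (h n ζ + K)) (μ := ν) (u := atTop)
        (fun n => (ENNReal.measurable_ofReal.comp_aemeasurable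
          (((hint n).aemeasurable).add aemeasurable_const)))
      refine le_trans (le_of_eq (lintegral_congr_ae ?_)) this
      filter_upwards [hlim] with ζ hζ
      exact (((ENNReal.continuous_ofReal.tendsto _).comp (hζ.add_const K)).liminf_eq).symm
    have heq : ∀ n, ∫⁻ ζ, ENNReal.ofReal (h n ζ + K) ∂ν
        = ENNReal.ofReal ((∫ ζ, h n ζ ∂ν) + K * (ν Set.univ).toReal) := by
      intro n
      have hnn : 0 ≤ᵐ[ν] (fun ζ => h n ζ + K) := by
        filter_upwards [hbd] with ζ hb
        simp only [Pi.zero_apply]; linarith [(hb.2 n).1]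
      rw [← ofReal_integral_eq_lintegral_ofReal (f := fun ζ => h n ζ + K)
        ((hint n).add (integrable_const K)) hnn]
      rw [integral_add (hint n) (integrable_const K), integral_const]
      simp [mul_comm, Measure.real]
    have hlim2 : Filter.Tendsto (fun n => ∫⁻ ζ, ENNReal.ofReal (h n ζ + K) ∂ν) atTop
        (𝓝 (ENNReal.ofReal (L + K * (ν Set.univ).toReal))) := by
      simp_rw [heq]
      exact (ENNReal.continuous_ofReal.tendsto _).comp (hL.add_const _)
    calc ∫⁻ ζ, ENNReal.ofReal (H ζ + K) ∂ν
        ≤ _ := key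
      _ = ENNReal.ofReal (L + K * (ν Set.univ).toReal) := hlim2.liminf_eq
      _ < ⊤ := ENNReal.ofReal_lt_top
  -- Step 2: dominated convergence with bound max H K
  have hbound : Integrable (fun ζ => max (H ζ) K) ν := by
    refine Integrable.mono' (g := fun ζ => H ζ + K + K)
      ((hHK.add (integrable_const K))) (hHm.sup aestronglyMeasurable_const) ?_
    filter_upwards [hbd] with ζ hb
    rw [Real.norm_eq_abs, abs_le]
    constructor
    · have h1 : K ≤ max (H ζ) K := le_max_right _ _
      linarith [hb.1]
    · rcases le_or_gt (H ζ) K with hc | hc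
      · rw [max_eq_right hc]; linarith [hb.1]
      · rw [max_eq_left hc.le]; linarith
  have hDCT := MeasureTheory.tendsto_integral_of_dominated_convergence
    (F := h) (f := H) (bound := fun ζ => max (H ζ) K)
    (fun n => (hint n).aestronglyMeasurable) hbound
    (fun n => by
      filter_upwards [hbd] with ζ hb
      rw [Real.norm_eq_abs, abs_le]
      exact ⟨by linarith [(hb.2 n).1, le_max_right (H ζ) K], (hb.2 n).2⟩)
    hlim
  have hHint : Integrable H ν := by
    refine Integrable.mono' hbound hHm ?_
    filter_upwards [hbd] with ζ hb
    rw [Real.norm_eq_abs, abs_le]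
    exact ⟨by linarith [hb.1, le_max_right (H ζ) K], le_max_left _ _⟩
  exact ⟨hHint, tendsto_nhds_unique hDCT hL⟩

set_option maxHeartbeats 1000000 in
/-- If `u*` is a critical point of
`f(u) = uβ - (1/2)u²σ² + ∫ (ln(1 + uγ(ζ)) - uγ(ζ)) dν(ζ)`
with `1 + u*γ(ζ) > 0` ν-a.e., then
`β - u*σ² = ∫ u*γ(ζ)²/(1 + u*γ(ζ)) dν(ζ)` (equation (3.9) of the paper). -/
theorem stmt2 (β σ : ℝ) (ν : Measure ℝ) [IsFiniteMeasure ν]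
    (γ : ℝ → ℝ) (hγm : Measurable γ) (C : ℝ) (hγb : ∀ ζ, |γ ζ| ≤ C)
    (hγ2 : Integrable (fun ζ => (γ ζ) ^ 2) ν)
    (f : ℝ → ℝ)
    (hf : f = fun u => u * β - (1 / 2) * u ^ 2 * σ ^ 2 +
      ∫ ζ, (Real.log (1 + u * γ ζ) - u * γ ζ) ∂ν)
    (uStar : ℝ) (hpos : ∀ᵐ ζ ∂ν, 1 + uStar * γ ζ > 0)
    (hcrit : HasDerivAt f 0 uStar) :
    β - uStar * σ ^ 2 = ∫ ζ, uStar * (γ ζ) ^ 2 / (1 + uStar * γ ζ) ∂ν := by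
  classical
  obtain ⟨s, hsdef⟩ : ∃ s : ℝ, s = if uStar < 0 then -1 else 1 := ⟨_, rfl⟩
  have hs1 : s = 1 ∨ s = -1 := by rw [hsdef]; split_ifs <;> simp
  have hsne : s ≠ 0 := by rcases hs1 with h|h <;> rw [h] <;> norm_num
  have habs_s : ∀ x : ℝ, |s * x| = |x| := by
    intro x; rcases hs1 with h|h <;> rw [h] <;> simp
  obtain ⟨C', hC'def⟩ : ∃ x : ℝ, x = |C| + 1 := ⟨_, rfl⟩
  have hC'1 : (1:ℝ) ≤ C' := by rw [hC'def]; linarith [abs_nonneg C]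
  have hC'0 : (0:ℝ) < C' := by linarith
  have hγC' : ∀ ζ, |γ ζ| ≤ C' := fun ζ =>
    le_trans (hγb ζ) (le_trans (le_abs_self C) (by rw [hC'def]; linarith))
  obtain ⟨r, hrdef⟩ : ∃ x : ℝ, x = 1/(4*C') := ⟨_, rfl⟩
  have hr0 : 0 < r := by rw [hrdef]; positivity
  obtain ⟨U, hUdef⟩ : ∃ x : ℝ, x = |uStar| + 1 := ⟨_, rfl⟩
  have hU1 : (1:ℝ) ≤ U := by rw [hUdef]; linarith [abs_nonneg uStar]
  have hU0 : (0:ℝ) < U := by linarith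
  -- the functions a, b
  obtain ⟨a, hadef⟩ : ∃ a : ℝ → ℝ, a = fun ζ => 1 + uStar * γ ζ := ⟨_, rfl⟩
  obtain ⟨b, hbdef⟩ : ∃ b : ℝ → ℝ, b = fun ζ => -s * γ ζ := ⟨_, rfl⟩
  have haval : ∀ ζ, a ζ = 1 + uStar * γ ζ := fun ζ => by rw [hadef]
  have hbval : ∀ ζ, b ζ = -s * γ ζ := fun ζ => by rw [hbdef]
  have hposa : ∀ᵐ ζ ∂ν, 0 < a ζ := by
    filter_upwards [hpos] with ζ hζ; rw [haval]; exact hζ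
  have hBle : ∀ ζ, |b ζ| ≤ C' := fun ζ => by
    rw [hbval, show -s * γ ζ = s * (-γ ζ) by ring, habs_s, abs_neg]; exact hγC' ζ
  have hAub : ∀ ζ, a ζ ≤ 1 + (U-1)*C' := fun ζ => by
    rw [haval, hUdef, add_sub_cancel_right]
    have h1 : uStar * γ ζ ≤ |uStar * γ ζ| := le_abs_self _
    rw [abs_mul] at h1
    nlinarith [abs_nonneg uStar, abs_nonneg (γ ζ), hγC' ζ]
  have hkey : ∀ ζ, 0 < a ζ → a ζ < 1/2 → 0 < b ζ ∧ 1/(2*U) ≤ b ζ := fun ζ h1 h2 => by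
    rw [hbval]
    rw [haval] at h1 h2
    rw [hUdef]
    exact stmt2_aux_sign uStar (γ ζ) s hsdef h1 h2
  -- the sequence τ
  obtain ⟨τ, hτdef⟩ : ∃ τ : ℕ → ℝ, τ = fun n : ℕ => r / (n + 2) := ⟨_, rfl⟩
  have hτval : ∀ n : ℕ, τ n = r / (n + 2) := fun n => by rw [hτdef]
  have hτpos : ∀ n, 0 < τ n := fun n => by rw [hτval]; positivity
  have hτlt : ∀ n, τ n < r := fun n => by
    rw [hτval]
    exact div_lt_self hr0 (by push_cast; linarith [Nat.cast_nonneg (α := ℝ) n])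
  have hτne : ∀ n, τ n ≠ 0 := fun n => (hτpos n).ne'
  have hτtend0 : Filter.Tendsto τ atTop (𝓝 0) := by
    rw [hτdef]
    apply Filter.Tendsto.div_atTop (tendsto_const_nhds)
    exact Filter.tendsto_atTop_add_const_right _ 2 tendsto_natCast_atTop_atTop
  have hτtend : Filter.Tendsto τ atTop (𝓝[≠] (0:ℝ)) := by
    rw [tendsto_nhdsWithin_iff]
    exact ⟨hτtend0, Filter.Eventually.of_forall fun n => by simpa using hτne n⟩
  -- measurability and basic integrability
  have hγae : AEStronglyMeasurable γ ν := hγm.aestronglyMeasurable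
  have hγint : Integrable γ ν := by
    refine Integrable.mono' (integrable_const C') hγae ?_
    exact Filter.Eventually.of_forall fun ζ => by rw [Real.norm_eq_abs]; exact hγC' ζ
  have hma : Measurable a := by rw [hadef]; exact measurable_const.add (measurable_const.mul hγm)
  have hmb : Measurable b := by rw [hbdef]; exact measurable_const.mul hγm
  have hHmeas : AEStronglyMeasurable (fun ζ => b ζ / a ζ) ν :=
    (hmb.div hma).aestronglyMeasurable
  -- integrability of the log integrands
  have hintlog : ∀ t : ℝ, 0 < t → t < r →
      Integrable (fun ζ => Real.log (a ζ + t * b ζ)) ν := by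
    intro t ht0 htr
    have hmin0 : (0:ℝ) < min (1/4) (t/(2*U)) := by positivity
    refine Integrable.mono' (integrable_const
      (|Real.log (min (1/4) (t/(2*U)))| + |Real.log (1 + (U-1)*C' + 1/4)|))
      ((Real.measurable_log.comp (hma.add (measurable_const.mul hmb))).aestronglyMeasurable) ?_
    filter_upwards [hposa] with ζ hζ
    obtain ⟨hlb, hub⟩ := stmt2_aux_range (a ζ) (b ζ) U C' t hC'1 hU1 (hBle ζ) hζ (hAub ζ)
      (fun h => (hkey ζ hζ h).2) ht0 (by rw [← hrdef]; exact htr)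
    have hl1 : Real.log (min (1/4) (t/(2*U))) ≤ Real.log (a ζ + t * b ζ) :=
      Real.log_le_log hmin0 hlb
    have hl2 : Real.log (a ζ + t * b ζ) ≤ Real.log (1 + (U-1)*C' + 1/4) :=
      Real.log_le_log (lt_of_lt_of_le hmin0 hlb) hub
    rw [Real.norm_eq_abs, abs_le]
    constructor
    · have := neg_abs_le (Real.log (min (1/4) (t/(2*U))))
      have := le_abs_self (Real.log (1 + (U-1)*C' + 1/4))
      have := abs_nonneg (Real.log (1 + (U-1)*C' + 1/4))
      linarith
    · have := le_abs_self (Real.log (1 + (U-1)*C' + 1/4))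
      have := abs_nonneg (Real.log (min (1/4) (t/(2*U))))
      linarith
  -- the difference quotient functions
  obtain ⟨h, hhdef⟩ : ∃ h : ℕ → ℝ → ℝ, h = fun n ζ =>
    (Real.log (a ζ + τ n * b ζ) - Real.log (a ζ + (τ n/2) * b ζ)) / (τ n / 2) := ⟨_, rfl⟩
  have hhval : ∀ n ζ, h n ζ =
    (Real.log (a ζ + τ n * b ζ) - Real.log (a ζ + (τ n/2) * b ζ)) / (τ n / 2) :=
    fun n ζ => by rw [hhdef]
  have hτhalf : ∀ n, 0 < τ n / 2 ∧ τ n / 2 < r := fun n =>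
    ⟨by linarith [hτpos n], by linarith [hτpos n, hτlt n]⟩
  have hinth : ∀ n, Integrable (h n) ν := fun n => by
    rw [hhdef]
    exact ((hintlog (τ n) (hτpos n) (hτlt n)).sub
      (hintlog (τ n / 2) (hτhalf n).1 (hτhalf n).2)).div_const _
  -- a.e. bounds
  have hbd : ∀ᵐ ζ ∂ν, (-(4*C') ≤ b ζ / a ζ) ∧
      ∀ n, -(4*C') ≤ h n ζ ∧ h n ζ ≤ max (b ζ / a ζ) (4*C') := by
    filter_upwards [hposa] with ζ hζ
    rcases le_or_gt 0 (b ζ) with hBp | hBn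
    · have hH0 : 0 ≤ b ζ / a ζ := div_nonneg hBp hζ.le
      refine ⟨by linarith, fun n => ?_⟩
      obtain ⟨h1, h2⟩ := stmt2_aux_nonneg (a ζ) (b ζ) (τ n) hζ hBp (hτpos n)
      exact ⟨by rw [hhval]; linarith,
        by rw [hhval]; exact le_trans h2 (le_max_left _ _)⟩
    · have hAhalf : 1/2 ≤ a ζ := by
        by_contra hcon
        exact absurd (hkey ζ hζ (by linarith)).1 (by linarith)
      have hBa : |b ζ / a ζ| ≤ 4*C' := by
        rw [abs_div, abs_of_pos hζ]
        rw [div_le_iff₀ hζ]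
        nlinarith [hBle ζ, abs_nonneg (b ζ),
          mul_le_mul_of_nonneg_left hAhalf (by positivity : (0:ℝ) ≤ 4*C')]
      refine ⟨by linarith [(abs_le.mp hBa).1], fun n => ?_⟩
      have hx : 1/4 ≤ a ζ + (τ n/2) * b ζ := by
        have : |(τ n/2) * b ζ| ≤ 1/4 := by
          rw [abs_mul, abs_of_pos (hτhalf n).1]
          calc (τ n/2) * |b ζ| ≤ (τ n/2) * C' := by
                nlinarith [abs_nonneg (b ζ), hBle ζ, (hτhalf n).1]
            _ ≤ r * C' := by nlinarith [(hτhalf n).2, hC'0, (hτhalf n).1]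
            _ ≤ 1/4 := by rw [hrdef, div_mul_eq_mul_div, div_le_iff₀ (by positivity : (0:ℝ) < 4*C')]; nlinarith
        nlinarith [(abs_le.mp this).1]
      have hy : 1/4 ≤ a ζ + τ n * b ζ := by
        have : |τ n * b ζ| ≤ 1/4 := by
          rw [abs_mul, abs_of_pos (hτpos n)]
          calc τ n * |b ζ| ≤ τ n * C' := by
                nlinarith [abs_nonneg (b ζ), hBle ζ, hτpos n]
            _ ≤ r * C' := by nlinarith [hτlt n, hC'0, hτpos n]
            _ ≤ 1/4 := by rw [hrdef, div_mul_eq_mul_div, div_le_iff₀ (by positivity : (0:ℝ) < 4*C')]; nlinarith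
        nlinarith [(abs_le.mp this).1]
      have hlip := stmt2_aux_lip (a ζ + (τ n/2) * b ζ) (a ζ + τ n * b ζ) hx hy
      have hdiff : (a ζ + τ n * b ζ) - (a ζ + (τ n/2) * b ζ) = (τ n/2) * b ζ := by ring
      rw [hdiff, abs_mul, abs_of_pos (hτhalf n).1] at hlip
      have hhabs : |h n ζ| ≤ 4*C' := by
        rw [hhval]
        rw [abs_div, abs_of_pos (hτhalf n).1, div_le_iff₀ (hτhalf n).1]
        calc |Real.log (a ζ + τ n * b ζ) - Real.log (a ζ + (τ n/2) * b ζ)|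
            ≤ 4 * ((τ n/2) * |b ζ|) := hlip
          _ ≤ 4*C' * (τ n/2) := by nlinarith [mul_le_mul_of_nonneg_left (hBle ζ) (le_of_lt (hτhalf n).1), (hτhalf n).1]
      exact ⟨by linarith [(abs_le.mp hhabs).1],
        le_trans (abs_le.mp hhabs).2 (le_max_right _ _)⟩
  -- a.e. pointwise convergence
  have hlimae : ∀ᵐ ζ ∂ν, Filter.Tendsto (fun n => h n ζ) atTop (𝓝 (b ζ / a ζ)) := by
    filter_upwards [hposa] with ζ hζ
    exact (stmt2_aux_tendsto (a ζ) (b ζ) hζ τ hτtend).congr fun n => (hhval n ζ).symm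
  -- value of f at safe points
  obtain ⟨Ig, hIgdef⟩ : ∃ x : ℝ, x = ∫ ζ, γ ζ ∂ν := ⟨_, rfl⟩
  have hΦ : ∀ t : ℝ, 0 < t → t < r →
      (∫ ζ, (Real.log (1 + (uStar - s*t) * γ ζ) - (uStar - s*t) * γ ζ) ∂ν)
        = (∫ ζ, Real.log (a ζ + t * b ζ) ∂ν) - (uStar - s*t) * Ig := by
    intro t ht0 htr
    have he : (fun ζ => Real.log (1 + (uStar - s*t) * γ ζ) - (uStar - s*t) * γ ζ)
        = fun ζ => Real.log (a ζ + t * b ζ) - (uStar - s*t) * γ ζ := by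
      funext ζ
      rw [haval, hbval]
      congr 2
      ring
    rw [he, integral_sub (hintlog t ht0 htr) (hγint.const_mul _), integral_const_mul, hIgdef]
  have hfval : ∀ t : ℝ, 0 < t → t < r →
      f (uStar - s*t) = (uStar - s*t)*β - (1/2)*(uStar - s*t)^2*σ^2
        + ((∫ ζ, Real.log (a ζ + t * b ζ) ∂ν) - (uStar - s*t) * Ig) := by
    intro t ht0 htr
    rw [hf]
    simp only []
    rw [hΦ t ht0 htr]
  -- slopes
  have hslope := hasDerivAt_iff_tendsto_slope.mp hcrit
  obtain ⟨S, hSdef⟩ : ∃ S : ℕ → ℝ, S = fun n => slope f uStar (uStar - s * τ n) := ⟨_, rfl⟩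
  obtain ⟨S', hS'def⟩ : ∃ x : ℕ → ℝ, x = fun n => slope f uStar (uStar - s * (τ n / 2)) := ⟨_, rfl⟩
  have t1 : Filter.Tendsto (fun n => uStar - s * τ n) atTop (𝓝 uStar) := by
    have := tendsto_const_nhds (x := uStar) (f := atTop (α := ℕ)) |>.sub (hτtend0.const_mul s)
    simpa using this
  have t2 : Filter.Tendsto (fun n => uStar - s * (τ n / 2)) atTop (𝓝 uStar) := by
    have := tendsto_const_nhds (x := uStar) (f := atTop (α := ℕ)) |>.sub
      ((hτtend0.div_const 2).const_mul s)
    simpa using this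
  have hwt : Filter.Tendsto (fun n => uStar - s * τ n) atTop (𝓝[≠] uStar) := by
    rw [tendsto_nhdsWithin_iff]
    refine ⟨t1, Filter.Eventually.of_forall fun n => ?_⟩
    simp only [Set.mem_compl_iff, Set.mem_singleton_iff]
    intro hcon
    exact (mul_ne_zero hsne (hτne n)) (by linarith)
  have hwt' : Filter.Tendsto (fun n => uStar - s * (τ n / 2)) atTop (𝓝[≠] uStar) := by
    rw [tendsto_nhdsWithin_iff]
    refine ⟨t2, Filter.Eventually.of_forall fun n => ?_⟩
    simp only [Set.mem_compl_iff, Set.mem_singleton_iff]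
    intro hcon
    exact (mul_ne_zero hsne (div_ne_zero (hτne n) two_ne_zero)) (by linarith)
  have hS : Filter.Tendsto S atTop (𝓝 0) := by rw [hSdef]; exact hslope.comp hwt
  have hS' : Filter.Tendsto S' atTop (𝓝 0) := by rw [hS'def]; exact hslope.comp hwt'
  -- difference of f values in terms of slopes
  have hfd : ∀ n, f (uStar - s*τ n) - f (uStar - s*(τ n/2))
      = S n * (-(s*τ n)) - S' n * (-(s*(τ n/2))) := by
    intro n
    rw [hSdef, hS'def]
    simp only []
    rw [slope_def_field, slope_def_field]
    have e1 : uStar - s*τ n - uStar = -(s*τ n) := by ring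
    have e2 : uStar - s*(τ n/2) - uStar = -(s*(τ n/2)) := by ring
    rw [e1, e2, div_mul_cancel₀ _ (neg_ne_zero.mpr (mul_ne_zero hsne (hτne n))),
      div_mul_cancel₀ _ (neg_ne_zero.mpr (mul_ne_zero hsne (div_ne_zero (hτne n) two_ne_zero)))]
    ring
  -- integral of h n
  have hIntn : ∀ n, ∫ ζ, h n ζ ∂ν
      = ((∫ ζ, Real.log (a ζ + τ n * b ζ) ∂ν)
        - ∫ ζ, Real.log (a ζ + (τ n/2) * b ζ) ∂ν) / (τ n / 2) := by
    intro n
    simp only [hhdef]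
    rw [integral_div, integral_sub (hintlog _ (hτpos n) (hτlt n))
      (hintlog _ (hτhalf n).1 (hτhalf n).2)]
  -- the key algebraic identity for each n
  have keyEq : ∀ n, ∫ ζ, h n ζ ∂ν =
      -(2*s)*S n + s*S' n + s*β - s*(σ^2/2)*((uStar - s*τ n) + (uStar - s*(τ n/2))) - s*Ig := by
    intro n
    have e1 := hfval (τ n) (hτpos n) (hτlt n)
    have e2 := hfval (τ n/2) (hτhalf n).1 (hτhalf n).2
    have e3 := hfd n
    rw [e1, e2] at e3
    rw [hIntn n, div_eq_iff (ne_of_gt (hτhalf n).1)]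
    rcases hs1 with hs'|hs' <;> rw [hs'] at e3 ⊢ <;> linear_combination e3
  -- the limit of the integrals
  have hL : Filter.Tendsto (fun n => ∫ ζ, h n ζ ∂ν) atTop
      (𝓝 (s*(β - uStar*σ^2) - s*Ig)) := by
    refine Filter.Tendsto.congr (fun n => (keyEq n).symm) ?_
    have hval : s*(β - uStar*σ^2) - s*Ig
        = (-(2*s)*0 + s*0 + s*β - s*(σ^2/2)*(uStar + uStar)) - s*Ig := by ring
    rw [hval]
    exact ((((hS.const_mul (-(2*s))).add (hS'.const_mul s)).add_const (s*β)).sub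
      ((t1.add t2).const_mul (s*(σ^2/2)))).sub_const (s*Ig)
  -- apply the convergence lemma
  obtain ⟨hHint, hHval⟩ := lemA h (fun ζ => b ζ / a ζ) (4*C') (by linarith) hinth hHmeas hbd
    hlimae hL
  -- final computation
  have hbint : Integrable b ν := by rw [hbdef]; exact hγint.const_mul _
  have hbIg : ∫ ζ, b ζ ∂ν = -s * Ig := by
    rw [hbdef, hIgdef]
    exact integral_const_mul _ _
  have hgoal1 : ∫ ζ, uStar * (γ ζ)^2 / (1 + uStar * γ ζ) ∂ν
      = ∫ ζ, s * (b ζ / a ζ - b ζ) ∂ν := by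
    apply integral_congr_ae
    filter_upwards [hposa] with ζ hζ
    have h0 : (1:ℝ) + uStar * γ ζ ≠ 0 := by rw [haval] at hζ; linarith
    rw [hbval ζ, haval ζ]
    rcases hs1 with hs'|hs' <;> rw [hs'] <;> field_simp <;> ring
  have hgoal2 : ∫ ζ, s * (b ζ / a ζ - b ζ) ∂ν
      = s * ((∫ ζ, b ζ / a ζ ∂ν) - ∫ ζ, b ζ ∂ν) := by
    rw [integral_const_mul, integral_sub hHint hbint]
  rw [hgoal1, hgoal2, hHval, hbIg]
  rcases hs1 with hs'|hs' <;> rw [hs'] <;> ring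
end

section
/- With Z as in the previous statement (θ ≠ 0), integration by parts gives ∫_ℝ Z(x)(e^{ix} - 1) dx = [ (y - n - θb) ∫_ℝ Z(x) dx - i θ²(T₀-t) ∫_ℝ x Z(x) dx ] / ( λ(T₀-t) ). -/
open MeasureTheory Complex Filter

section Aux

variable (lam T₀ θ t n b y : ℝ)

/-- The entire function whose restriction to ℝ is the exponent of `Z`. -/
noncomputable def Gfun (z : ℂ) : ℂ :=
  I * z * n + I * z * θ * b + (lam : ℂ) * (T₀ - t) * (Complex.exp (I * z) - 1 - I * z) -
    (1 / 2 : ℂ) * z ^ 2 * θ ^ 2 * (T₀ - t) - I * z * y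

lemma Gfun_hasDerivAt (z : ℂ) :
    HasDerivAt (Gfun lam T₀ θ t n b y)
      (I * n + I * θ * b + (lam : ℂ) * (T₀ - t) * (I * Complex.exp (I * z) - I) -
        z * θ ^ 2 * (T₀ - t) - I * y) z := by
  have h1 : HasDerivAt (fun z : ℂ => I * z * n) (I * n) z := by
    simpa using (((hasDerivAt_id z).const_mul I).mul_const (n : ℂ))
  have h2 : HasDerivAt (fun z : ℂ => I * z * θ * b) (I * θ * b) z := by
    simpa [mul_assoc] using ((((hasDerivAt_id z).const_mul I).mul_const (θ : ℂ)).mul_const (b : ℂ))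
  have hexp : HasDerivAt (fun z : ℂ => Complex.exp (I * z)) (I * Complex.exp (I * z)) z := by
    simpa [mul_comm] using ((hasDerivAt_id z).const_mul I).cexp
  have h3 : HasDerivAt (fun z : ℂ =>
      (lam : ℂ) * (T₀ - t) * (Complex.exp (I * z) - 1 - I * z))
      ((lam : ℂ) * (T₀ - t) * (I * Complex.exp (I * z) - I)) z := by
    have : HasDerivAt (fun z : ℂ => Complex.exp (I * z) - 1 - I * z)
        (I * Complex.exp (I * z) - I) z := by
      exact (hexp.sub_const 1).sub (by simpa using (hasDerivAt_id z).const_mul I : HasDerivAt (fun z : ℂ => I * z) I z)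
    exact this.const_mul _
  have h4 : HasDerivAt (fun z : ℂ => (1 / 2 : ℂ) * z ^ 2 * θ ^ 2 * (T₀ - t))
      (z * θ ^ 2 * (T₀ - t)) z := by
    have := (((hasDerivAt_pow 2 z).const_mul (1 / 2 : ℂ)).mul_const ((θ : ℂ) ^ 2)).mul_const
      ((T₀ : ℂ) - t)
    refine this.congr_deriv ?_
    rw [show (2:ℕ) - 1 = 1 from rfl]
    ring
  have h5 : HasDerivAt (fun z : ℂ => I * z * y) (I * y) z := by
    simpa using (((hasDerivAt_id z).const_mul I).mul_const (y : ℂ))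
  exact ((((h1.add h2).add h3).sub h4).sub h5)

lemma Gfun_re (x : ℝ) :
    (Gfun lam T₀ θ t n b y x).re =
      lam * (T₀ - t) * (Real.cos x - 1) - (1 / 2) * x ^ 2 * θ ^ 2 * (T₀ - t) := by
  have h1 : Complex.exp (I * x) = Complex.ofReal (Real.cos x) + Complex.ofReal (Real.sin x) * I := by
    rw [mul_comm, Complex.exp_mul_I, Complex.ofReal_cos, Complex.ofReal_sin]
  rw [Gfun, h1]
  simp [pow_two, Complex.mul_re, Complex.mul_im, Complex.add_re, Complex.add_im,
    Complex.sub_re, Complex.sub_im, Complex.I_re, Complex.I_im, Complex.ofReal_re,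
    Complex.ofReal_im, Complex.one_re, Complex.one_im, Complex.div_re, Complex.div_im,
    Complex.normSq, Complex.cos_ofReal_re, Complex.sin_ofReal_re, Complex.cos_ofReal_im,
    Complex.sin_ofReal_im]

end Aux

/-- With `Z(x) = exp(ixn + ixθb + λ(T₀-t)(e^{ix}-1-ix) - ½x²θ²(T₀-t) - ixy)` and `θ ≠ 0`,
integration by parts gives
`∫ Z(x)(e^{ix}-1) dx = [(y-n-θb)∫Z dx - iθ²(T₀-t)∫ xZ(x) dx] / (λ(T₀-t))`. -/
theorem stmt11 (lam T₀ θ t n b y : ℝ) (hlam : 0 < lam) (hT₀ : 0 < T₀)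
    (ht : 0 ≤ t ∧ t < T₀) (hθ : θ ≠ 0)
    (Z : ℝ → ℂ)
    (hZ : Z = fun x : ℝ => Complex.exp (I * x * n + I * x * θ * b +
      (lam : ℂ) * (T₀ - t) * (Complex.exp (I * x) - 1 - I * x) -
      (1 / 2 : ℂ) * x ^ 2 * θ ^ 2 * (T₀ - t) - I * x * y)) :
    ∫ x : ℝ, Z x * (Complex.exp (I * x) - 1) =
      (((y : ℂ) - n - θ * b) * (∫ x : ℝ, Z x) -
        I * θ ^ 2 * (T₀ - t) * ∫ x : ℝ, (x : ℂ) * Z x) / ((lam : ℂ) * (T₀ - t)) := by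
  have hTt : (0:ℝ) < T₀ - t := by linarith [ht.2]
  set a : ℝ := θ ^ 2 * (T₀ - t) with ha
  have ha2 : (0:ℝ) < a / 2 := by positivity
  have hZG : Z = fun x : ℝ => Complex.exp (Gfun lam T₀ θ t n b y x) := by
    rw [hZ]; rfl
  -- norm bound
  have hnorm : ∀ x : ℝ, ‖Z x‖ ≤ Real.exp (-(a / 2) * x ^ 2) := by
    intro x
    rw [hZG]
    simp only [Complex.norm_exp]
    apply Real.exp_le_exp.2
    rw [Gfun_re]
    have hcos : Real.cos x - 1 ≤ 0 := by linarith [Real.cos_le_one x]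
    nlinarith [mul_nonneg (mul_nonneg hlam.le hTt.le) (neg_nonneg.2 hcos)]
  -- continuity
  have hZcont : Continuous Z := by
    rw [hZG]
    apply Complex.continuous_exp.comp
    unfold Gfun
    fun_prop
  -- integrability of Z
  have intZ : Integrable Z := by
    refine (integrable_exp_neg_mul_sq ha2).mono' hZcont.aestronglyMeasurable ?_
    exact Eventually.of_forall hnorm
  -- integrability of x * Z
  have intXZ : Integrable fun x : ℝ => (x : ℂ) * Z x := by
    have hg : Integrable (fun x : ℝ => |x| * Real.exp (-(a / 2) * x ^ 2)) := by
      have := (integrable_mul_exp_neg_mul_sq ha2).abs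
      refine this.congr (Eventually.of_forall fun x => ?_)
      simp [abs_mul, abs_of_pos (Real.exp_pos _)]
    refine hg.mono' (Complex.continuous_ofReal.mul hZcont).aestronglyMeasurable
      (Eventually.of_forall fun x => ?_)
    rw [norm_mul, Complex.norm_real, Real.norm_eq_abs]
    exact mul_le_mul_of_nonneg_left (hnorm x) (abs_nonneg x)
  -- integrability of Z * (e^{ix} - 1)
  have intZE : Integrable fun x : ℝ => Z x * (Complex.exp (I * x) - 1) := by
    have hg : Integrable (fun x : ℝ => 2 * Real.exp (-(a / 2) * x ^ 2)) :=
      (integrable_exp_neg_mul_sq ha2).const_mul 2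
    have hcont2 : Continuous fun x : ℝ => Z x * (Complex.exp (I * x) - 1) :=
      hZcont.mul ((Complex.continuous_exp.comp (by fun_prop)).sub continuous_const)
    refine hg.mono' hcont2.aestronglyMeasurable (Eventually.of_forall fun x => ?_)
    rw [norm_mul]
    have h1 : ‖Complex.exp (I * x) - 1‖ ≤ 2 := by
      calc ‖Complex.exp (I * x) - 1‖ ≤ ‖Complex.exp (I * x)‖ + ‖(1 : ℂ)‖ := norm_sub_le _ _
        _ ≤ 2 := by
          simp only [Complex.norm_exp]
          have : (I * (x:ℂ)).re = 0 := by simp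
          rw [this, Real.exp_zero]
          norm_num
    calc ‖Z x‖ * ‖Complex.exp (I * x) - 1‖ ≤ Real.exp (-(a / 2) * x ^ 2) * 2 :=
          mul_le_mul (hnorm x) h1 (norm_nonneg _) (Real.exp_nonneg _)
      _ = 2 * Real.exp (-(a / 2) * x ^ 2) := by ring
  -- the derivative, written as a combination of the three integrands
  have hZder : ∀ x : ℝ, HasDerivAt Z
      ((I * ((n:ℂ) + θ * b - y)) * Z x +
        (I * lam * ((T₀:ℂ) - t)) * (Z x * (Complex.exp (I * x) - 1)) -
        ((θ:ℂ) ^ 2 * ((T₀:ℂ) - t)) * ((x : ℂ) * Z x)) x := by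
    intro x
    have h := ((Gfun_hasDerivAt lam T₀ θ t n b y (x : ℂ)).comp_ofReal).cexp
    simp only [hZG]
    convert h using 1
    ring
  -- integrability of the derivative
  have intD : Integrable (fun x : ℝ =>
      (I * ((n:ℂ) + θ * b - y)) * Z x +
        (I * lam * ((T₀:ℂ) - t)) * (Z x * (Complex.exp (I * x) - 1)) -
        ((θ:ℂ) ^ 2 * ((T₀:ℂ) - t)) * ((x : ℂ) * Z x)) :=
    ((intZ.const_mul _).add (intZE.const_mul _)).sub (intXZ.const_mul _)
  -- Z tends to 0 at ±∞
  have htop : Tendsto (fun x : ℝ => Real.exp (-(a / 2) * x ^ 2)) atTop (nhds 0) := by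
    apply Real.tendsto_exp_atBot.comp
    have h1 : Tendsto (fun x : ℝ => (a / 2) * x ^ 2) atTop atTop :=
      (tendsto_pow_atTop (two_ne_zero)).const_mul_atTop ha2
    have := tendsto_neg_atTop_atBot.comp h1
    simpa [Function.comp_def, neg_mul] using this
  have hbot : Tendsto (fun x : ℝ => Real.exp (-(a / 2) * x ^ 2)) atBot (nhds 0) := by
    have := htop.comp tendsto_neg_atBot_atTop
    simpa [Function.comp_def, neg_sq] using this
  have hZtop : Tendsto Z atTop (nhds 0) := squeeze_zero_norm hnorm htop
  have hZbot : Tendsto Z atBot (nhds 0) := squeeze_zero_norm hnorm hbot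
  -- the integral of the derivative vanishes
  have hzero : (∫ x : ℝ,
      ((I * ((n:ℂ) + θ * b - y)) * Z x +
        (I * lam * ((T₀:ℂ) - t)) * (Z x * (Complex.exp (I * x) - 1)) -
        ((θ:ℂ) ^ 2 * ((T₀:ℂ) - t)) * ((x : ℂ) * Z x))) = 0 := by
    have := MeasureTheory.integral_of_hasDerivAt_of_tendsto hZder intD hZbot hZtop
    simpa using this
  have i1 : Integrable (fun x : ℝ => (I * ((n:ℂ) + θ * b - y)) * Z x +
      (I * lam * ((T₀:ℂ) - t)) * (Z x * (Complex.exp (I * x) - 1))) :=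
    (intZ.const_mul _).add (intZE.const_mul _)
  rw [integral_sub i1 (intXZ.const_mul _),
    integral_add (intZ.const_mul _) (intZE.const_mul _), integral_const_mul,
    integral_const_mul, integral_const_mul] at hzero
  set A := ∫ x : ℝ, Z x
  set B := ∫ x : ℝ, (x : ℂ) * Z x
  set C := ∫ x : ℝ, Z x * (Complex.exp (I * x) - 1)
  have hc : ((lam : ℂ) * ((T₀:ℂ) - t)) ≠ 0 := by
    apply mul_ne_zero
    · exact_mod_cast hlam.ne'
    · rw [show ((T₀:ℂ) - t) = ((T₀ - t : ℝ) : ℂ) by push_cast; ring]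
      exact_mod_cast hTt.ne'
  rw [eq_div_iff hc]
  have hI2 : (I : ℂ) ^ 2 = -1 := Complex.I_sq
  linear_combination (-I) * hzero + ((lam : ℂ) * ((T₀:ℂ) - t) * C - (θ:ℂ)^2 * ((T₀:ℂ) - t) * B) * hI2 + (((T₀:ℂ) - t) * (θ:ℂ)^2 * B + ((n:ℂ) + θ * b - y) * A) * hI2
end
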